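/- arXiv:2108.00473 — 3 statements merged into one kernel-verified Lean document; each statement's English description precedes it below -/
import Mathlib

section
/- Let f : ℝ^{d_x} × ℝ^{d_y} → ℝ be differentiable and suppose that for every y the map x ↦ ∇_x f(x,y) is L_x-Lipschitz and for every x the map y ↦ ∇_y f(x,y) is L_y-Lipschitz. Then for all μ₁ > 0, μ₂ > 0 and all (x,y): |f_{μ₁}(x,y) − f(x,y)| ≤ L_x μ₁² / 2 and |f_{μ₂}(x,y) − f(x,y)| ≤ L_y μ₂² / 2. -/
/-!
With an `L`-Lipschitz gradient, `|g (x + v) - g x - ⟪∇g x, v⟫| ≤ L ‖v‖² / 2`. Averaging over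
`v = μ u` with `u` drawn from a probability measure that is symmetric under `u ↦ -u` and carried
by the unit ball, the linear term averages to zero and the remainder is at most `L μ² / 2`.
Applying this in each variable separately, with the uniform measure on the unit ball, gives
both bounds.
-/

open MeasureTheory Metric
open scoped ENNReal RealInnerProductSpace

/-- Uniform probability measure on the closed unit Euclidean ball of `ℝ^d`
(normalized Lebesgue measure on the ball). -/
noncomputable def ballUniform (d : ℕ) : Measure (EuclideanSpace ℝ (Fin d)) :=
  (volume (closedBall (0 : EuclideanSpace ℝ (Fin d)) 1))⁻¹ •
    volume.restrict (closedBall (0 : EuclideanSpace ℝ (Fin d)) 1)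

/-- Uniform probability measure on the unit Euclidean sphere of `ℝ^d`, realized as the
pushforward of the uniform measure on the unit ball under the radial projection
`x ↦ x/‖x‖`; this coincides with the normalized surface (rotation invariant) measure. -/
noncomputable def sphereUniform (d : ℕ) : Measure (EuclideanSpace ℝ (Fin d)) :=
  (ballUniform d).map fun x => ‖x‖⁻¹ • x

theorem nonneg_of_norm_sub_le_mul_norm_sub {α β : Type*} [NormedAddCommGroup α] [Nontrivial α]
    [SeminormedAddCommGroup β] {F : α → β} {L : ℝ} (h : ∀ a b, ‖F a - F b‖ ≤ L * ‖a - b‖) :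
    0 ≤ L := by
  obtain ⟨a, ha⟩ := exists_ne (0 : α)
  have hpos : 0 < ‖a - 0‖ := by simpa using ha
  exact nonneg_of_mul_nonneg_left ((norm_nonneg _).trans (h a 0)) hpos

section Descent

variable {E : Type*} [NormedAddCommGroup E] [InnerProductSpace ℝ E] [CompleteSpace E]
  {g : E → ℝ} {L : ℝ}

theorem abs_sub_sub_inner_gradient_le (hg : Differentiable ℝ g)
    (hlip : ∀ a b, ‖gradient g a - gradient g b‖ ≤ L * ‖a - b‖) (a v : E) :
    |g (a + v) - g a - ⟪gradient g a, v⟫| ≤ L / 2 * ‖v‖ ^ 2 := by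
  set φ : ℝ → ℝ := fun t => g (a + t • v) - g a - t * ⟪gradient g a, v⟫
  have hφ : ∀ t, HasDerivAt φ ⟪gradient g (a + t • v) - gradient g a, v⟫ t := by
    intro t
    have hline : HasDerivAt (fun t : ℝ => a + t • v) v t := by
      simpa using ((hasDerivAt_id t).smul_const v).const_add a
    have := (((hg _).hasGradientAt.hasFDerivAt.comp_hasDerivAt t hline).sub_const (g a)).sub
      ((hasDerivAt_id t).mul_const ⟪gradient g a, v⟫)
    refine this.congr_deriv ?_
    simp [inner_sub_left]
  have hbound := image_norm_le_of_norm_deriv_right_le_deriv_boundary (a := 0) (b := 1)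
    (f := φ) (B := fun t => L / 2 * t ^ 2 * ‖v‖ ^ 2) (B' := fun t => L * t * ‖v‖ ^ 2)
    (fun t _ => (hφ t).continuousAt.continuousWithinAt)
    (fun t _ => (hφ t).hasDerivWithinAt) (by simp [φ])
    (fun t =>
      (((hasDerivAt_pow 2 t).const_mul (L / 2)).mul_const (‖v‖ ^ 2)).congr_deriv (by ring))
    (fun t ht => by
      calc ‖⟪gradient g (a + t • v) - gradient g a, v⟫‖
          ≤ ‖gradient g (a + t • v) - gradient g a‖ * ‖v‖ := abs_real_inner_le_norm _ _
        _ ≤ L * ‖a + t • v - a‖ * ‖v‖ := by gcongr; exact hlip _ _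
        _ = L * t * ‖v‖ ^ 2 := by
          rw [add_sub_cancel_left, norm_smul, Real.norm_of_nonneg ht.1]; ring)
    (Set.right_mem_Icc.mpr zero_le_one)
  simpa [φ] using hbound

end Descent

section Smoothing

variable {E : Type*} [NormedAddCommGroup E] [InnerProductSpace ℝ E] [MeasurableSpace E]
  [BorelSpace E] {ν : Measure E}

theorem integral_inner_eq_zero_of_isNegInvariant [ν.IsNegInvariant] (w : E) :
    ∫ u, ⟪w, u⟫ ∂ν = 0 := by
  have h := integral_neg_eq_self (fun u => ⟪w, u⟫) ν
  simp only [inner_neg_right, integral_neg] at h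
  linarith

variable [CompleteSpace E] [IsProbabilityMeasure ν] [ν.IsNegInvariant] {g : E → ℝ} {L : ℝ}

theorem abs_integral_comp_add_smul_sub_le (hν : ∀ᵐ u ∂ν, ‖u‖ ≤ 1) (hg : Differentiable ℝ g)
    (hlip : ∀ a b, ‖gradient g a - gradient g b‖ ≤ L * ‖a - b‖) (hL : 0 ≤ L) (x : E) (μ : ℝ) :
    |∫ u, g (x + μ • u) ∂ν - g x| ≤ L * μ ^ 2 / 2 := by
  have hgc := hg.continuous
  set G := gradient g x
  set R : E → ℝ := fun u => g (x + μ • u) - g x - ⟪G, μ • u⟫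
  have hR : ∀ᵐ u ∂ν, ‖R u‖ ≤ L * μ ^ 2 / 2 := by
    filter_upwards [hν] with u hu
    have hμu : ‖μ • u‖ ^ 2 ≤ μ ^ 2 := by
      rw [norm_smul, mul_pow, Real.norm_eq_abs, sq_abs]
      exact mul_le_of_le_one_right (sq_nonneg μ) (pow_le_one₀ (norm_nonneg u) hu)
    calc ‖R u‖ ≤ L / 2 * ‖μ • u‖ ^ 2 := abs_sub_sub_inner_gradient_le hg hlip x (μ • u)
      _ ≤ L / 2 * μ ^ 2 := by gcongr
      _ = L * μ ^ 2 / 2 := by ring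
  have hR_int : Integrable R ν :=
    Integrable.of_bound (by simp only [R]; fun_prop) _ hR
  have hlin_int : Integrable (fun u => ⟪G, μ • u⟫) ν := by
    refine Integrable.of_bound
      (continuous_const.inner (continuous_id.const_smul μ)).aestronglyMeasurable (‖G‖ * |μ|) ?_
    filter_upwards [hν] with u hu
    calc ‖⟪G, μ • u⟫‖ ≤ ‖G‖ * ‖μ • u‖ := norm_inner_le_norm _ _
      _ ≤ ‖G‖ * |μ| := by
        rw [norm_smul, Real.norm_eq_abs]
        gcongr
        exact mul_le_of_le_one_right (abs_nonneg μ) hu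
  have hlin : ∫ u, ⟪G, μ • u⟫ ∂ν = 0 := by
    simp only [inner_smul_right, integral_const_mul, integral_inner_eq_zero_of_isNegInvariant,
      mul_zero]
  have hsplit : ∫ u, g (x + μ • u) ∂ν - g x = ∫ u, R u ∂ν := by
    have : (fun u => g (x + μ • u)) = fun u => R u + ⟪G, μ • u⟫ + g x := by
      ext u; simp only [R]; ring
    rw [this, integral_add (f := fun u => R u + ⟪G, μ • u⟫) (hR_int.add hlin_int)
        (integrable_const _), integral_add hR_int hlin_int, hlin, integral_const, probReal_univ,
      one_smul, add_zero, add_sub_cancel_right]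
  rw [hsplit, ← Real.norm_eq_abs]
  simpa using norm_integral_le_of_norm_le_const hR

end Smoothing

open ProbabilityTheory in
theorem ProbabilityTheory.isNegInvariant_cond {G : Type*} [MeasurableSpace G] [InvolutiveNeg G]
    [MeasurableNeg G] (μ : Measure G) [μ.IsNegInvariant] {s : Set G} (hs : -s = s) :
    (μ[|s]).IsNegInvariant := by
  constructor
  ext t ht
  rw [Measure.neg, Measure.map_apply measurable_neg ht, cond_apply' (measurable_neg ht),
    cond_apply' ht, Set.neg_preimage, ← Measure.measure_neg μ (s ∩ -t), Set.inter_neg, neg_neg,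
    hs]

open ProbabilityTheory in
theorem ballUniform_eq_cond (d : ℕ) :
    ballUniform d = volume[|closedBall (0 : EuclideanSpace ℝ (Fin d)) 1] := rfl

instance (d : ℕ) : IsProbabilityMeasure (ballUniform d) :=
  ProbabilityTheory.cond_isProbabilityMeasure_of_finite
    (measure_closedBall_pos _ _ one_pos).ne' measure_closedBall_lt_top.ne

instance (d : ℕ) : (ballUniform d).IsNegInvariant := by
  rw [ballUniform_eq_cond]
  exact ProbabilityTheory.isNegInvariant_cond _ (by simp)

theorem ae_norm_le_one_ballUniform (d : ℕ) : ∀ᵐ u ∂ballUniform d, ‖u‖ ≤ 1 := by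
  filter_upwards [ProbabilityTheory.ae_cond_mem measurableSet_closedBall] with u hu
  simpa using hu

theorem smoothed_function_gap_general
    (dx dy : ℕ) (hdx : 1 ≤ dx) (hdy : 1 ≤ dy)
    (f : EuclideanSpace ℝ (Fin dx) → EuclideanSpace ℝ (Fin dy) → ℝ)
    (hdiff : Differentiable ℝ
      fun p : EuclideanSpace ℝ (Fin dx) × EuclideanSpace ℝ (Fin dy) => f p.1 p.2)
    (Lx Ly : ℝ)
    (hlipx : ∀ (y : EuclideanSpace ℝ (Fin dy)) (x₁ x₂ : EuclideanSpace ℝ (Fin dx)),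
      ‖gradient (fun x => f x y) x₁ - gradient (fun x => f x y) x₂‖ ≤ Lx * ‖x₁ - x₂‖)
    (hlipy : ∀ (x : EuclideanSpace ℝ (Fin dx)) (y₁ y₂ : EuclideanSpace ℝ (Fin dy)),
      ‖gradient (fun y => f x y) y₁ - gradient (fun y => f x y) y₂‖ ≤ Ly * ‖y₁ - y₂‖)
    (μ₁ μ₂ : ℝ) :
    ∀ (x : EuclideanSpace ℝ (Fin dx)) (y : EuclideanSpace ℝ (Fin dy)),
      |(∫ u, f (x + μ₁ • u) y ∂(ballUniform dx)) - f x y| ≤ Lx * μ₁ ^ 2 / 2 ∧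
      |(∫ v, f x (y + μ₂ • v) ∂(ballUniform dy)) - f x y| ≤ Ly * μ₂ ^ 2 / 2 := by
  intro x y
  have : NeZero dx := ⟨by omega⟩
  have : NeZero dy := ⟨by omega⟩
  have hfx : Differentiable ℝ fun x' => f x' y :=
    hdiff.comp (differentiable_id.prodMk (differentiable_const y))
  have hfy : Differentiable ℝ fun y' => f x y' :=
    hdiff.comp ((differentiable_const x).prodMk differentiable_id)
  exact ⟨abs_integral_comp_add_smul_sub_le (ae_norm_le_one_ballUniform dx) hfx (hlipx y)
      (nonneg_of_norm_sub_le_mul_norm_sub (hlipx y)) x μ₁,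
    abs_integral_comp_add_smul_sub_le (ae_norm_le_one_ballUniform dy) hfy (hlipy x)
      (nonneg_of_norm_sub_le_mul_norm_sub (hlipy x)) y μ₂⟩

/-- `|f_{μ₁}(x,y) − f(x,y)| ≤ L_x μ₁²/2` and `|f_{μ₂}(x,y) − f(x,y)| ≤ L_y μ₂²/2`. -/
theorem smoothed_function_gap
    (dx dy : ℕ) (hdx : 1 ≤ dx) (hdy : 1 ≤ dy)
    (f : EuclideanSpace ℝ (Fin dx) → EuclideanSpace ℝ (Fin dy) → ℝ)
    (hdiff : Differentiable ℝ
      fun p : EuclideanSpace ℝ (Fin dx) × EuclideanSpace ℝ (Fin dy) => f p.1 p.2)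
    (Lx Ly : ℝ)
    (hlipx : ∀ (y : EuclideanSpace ℝ (Fin dy)) (x₁ x₂ : EuclideanSpace ℝ (Fin dx)),
      ‖gradient (fun x => f x y) x₁ - gradient (fun x => f x y) x₂‖ ≤ Lx * ‖x₁ - x₂‖)
    (hlipy : ∀ (x : EuclideanSpace ℝ (Fin dx)) (y₁ y₂ : EuclideanSpace ℝ (Fin dy)),
      ‖gradient (fun y => f x y) y₁ - gradient (fun y => f x y) y₂‖ ≤ Ly * ‖y₁ - y₂‖)
    (μ₁ μ₂ : ℝ) (hμ₁ : 0 < μ₁) (hμ₂ : 0 < μ₂) :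
    ∀ (x : EuclideanSpace ℝ (Fin dx)) (y : EuclideanSpace ℝ (Fin dy)),
      |(∫ u, f (x + μ₁ • u) y ∂(ballUniform dx)) - f x y| ≤ Lx * μ₁ ^ 2 / 2 ∧
      |(∫ v, f x (y + μ₂ • v) ∂(ballUniform dy)) - f x y| ≤ Ly * μ₂ ^ 2 / 2 :=
  smoothed_function_gap_general dx dy hdx hdy f hdiff Lx Ly hlipx hlipy μ₁ μ₂
end

section
/- Let f : ℝ^{d_x} × ℝ^{d_y} → ℝ be differentiable and suppose that for every y the map x ↦ ∇_x f(x,y) is L_x-Lipschitz and for every x the map y ↦ ∇_y f(x,y) is L_y-Lipschitz. Then for all μ₁ > 0, μ₂ > 0 and all (x,y), the map x ↦ f_{μ₁}(x,y) is differentiable with ‖∇_x f_{μ₁}(x,y) − ∇_x f(x,y)‖² ≤ μ₁² d_x² L_x² / 4, and the map y ↦ f_{μ₂}(x,y) is differentiable with ‖∇_y f_{μ₂}(x,y) − ∇_y f(x,y)‖² ≤ μ₂² d_y² L_y² / 4. -/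
open MeasureTheory Metric
open scoped ENNReal RealInnerProductSpace

/-!
Averaging `g (x + μ • u)` over a compactly supported probability measure `ν` commutes with
differentiation, so the gradient of the smoothed function is the `ν`-average of `∇g` over the
shifted points. If `∇g` is `L`-Lipschitz, the averaged gradient differs from `∇g x` by at most
`L |μ| 𝔼‖u‖`, and for the uniform measure on the unit ball of `ℝ^d` polar coordinates give
`𝔼‖u‖ = d / (d + 1) ≤ d / 2`.
-/

theorem Continuous.integrable_of_ae_mem_of_isCompact {α G : Type*} [TopologicalSpace α]
    [T2Space α] [MeasurableSpace α] [OpensMeasurableSpace α] [NormedAddCommGroup G] {ν : Measure α}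
    [IsFiniteMeasure ν] {K : Set α} {φ : α → G} (hφ : Continuous φ) (hK : IsCompact K)
    (hν : ∀ᵐ u ∂ν, u ∈ K) : Integrable φ ν := by
  rw [← Measure.restrict_eq_self_of_ae_mem hν]
  exact hφ.continuousOn.integrableOn_compact hK

theorem contDiff_one_of_norm_fderiv_sub_le {E F : Type*} [NormedAddCommGroup E]
    [NormedSpace ℝ E] [NormedAddCommGroup F] [NormedSpace ℝ F] {g : E → F}
    (hg : Differentiable ℝ g) {L : ℝ} (hL : ∀ a b, ‖fderiv ℝ g a - fderiv ℝ g b‖ ≤ L * ‖a - b‖) :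
    ContDiff ℝ 1 g :=
  contDiff_one_iff_fderiv.2
    ⟨hg, (LipschitzWith.of_dist_le' (by simpa only [dist_eq_norm] using hL)).continuous⟩

section Smoothing

variable {E F : Type*} [NormedAddCommGroup E] [NormedSpace ℝ E] [FiniteDimensional ℝ E]
  [MeasurableSpace E] [BorelSpace E] [NormedAddCommGroup F] [NormedSpace ℝ F]
  {ν : Measure E} {K : Set E} {g : E → F}

theorem hasFDerivAt_integral_comp_add_smul [IsFiniteMeasure ν] (hg : ContDiff ℝ 1 g)
    (hK : IsCompact K) (hν : ∀ᵐ u ∂ν, u ∈ K) (μ : ℝ) (x₀ : E) :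
    HasFDerivAt (fun x => ∫ u, g (x + μ • u) ∂ν) (∫ u, fderiv ℝ g (x₀ + μ • u) ∂ν) x₀ := by
  obtain ⟨s, hs, hs_nhds⟩ := exists_compact_mem_nhds x₀
  have hg' : Continuous (fderiv ℝ g) := hg.continuous_fderiv one_ne_zero
  obtain ⟨C, hC⟩ := (hs.add (hK.smul μ)).exists_bound_of_continuousOn hg'.continuousOn
  refine hasFDerivAt_integral_of_dominated_of_fderiv_le (bound := fun _ => C)
    (F' := fun x u => fderiv ℝ g (x + μ • u)) hs_nhds
    (.of_forall fun x => (hg.continuous.comp (by fun_prop)).aestronglyMeasurable)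
    ((hg.continuous.comp (by fun_prop)).integrable_of_ae_mem_of_isCompact hK hν)
    (hg'.comp (by fun_prop)).aestronglyMeasurable ?_ (integrable_const C) ?_
  · filter_upwards [hν] with u hu x hx
    exact hC _ (Set.add_mem_add hx (Set.smul_mem_smul_set hu))
  · filter_upwards with u x _
    exact (hasFDerivAt_comp_add_right (μ • u)).2 ((hg.differentiable one_ne_zero) _).hasFDerivAt

theorem norm_fderiv_integral_comp_add_smul_sub_le [CompleteSpace F]
    [IsProbabilityMeasure ν] (hg : Differentiable ℝ g) {L : ℝ}
    (hL : ∀ a b, ‖fderiv ℝ g a - fderiv ℝ g b‖ ≤ L * ‖a - b‖) (hK : IsCompact K)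
    (hν : ∀ᵐ u ∂ν, u ∈ K) (μ : ℝ) (x : E) :
    ‖fderiv ℝ (fun x' => ∫ u, g (x' + μ • u) ∂ν) x - fderiv ℝ g x‖ ≤
      L * |μ| * ∫ u, ‖u‖ ∂ν := by
  have hg₁ := contDiff_one_of_norm_fderiv_sub_le hg hL
  have hint : Integrable (fun u => fderiv ℝ g (x + μ • u)) ν :=
    ((hg₁.continuous_fderiv one_ne_zero).comp (by fun_prop)).integrable_of_ae_mem_of_isCompact hK hν
  rw [(hasFDerivAt_integral_comp_add_smul hg₁ hK hν μ x).fderiv]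
  calc ‖∫ u, fderiv ℝ g (x + μ • u) ∂ν - fderiv ℝ g x‖
      = ‖∫ u, (fderiv ℝ g (x + μ • u) - fderiv ℝ g x) ∂ν‖ := by
        rw [integral_sub hint (integrable_const _), integral_const, probReal_univ, one_smul]
    _ ≤ ∫ u, ‖fderiv ℝ g (x + μ • u) - fderiv ℝ g x‖ ∂ν := norm_integral_le_integral_norm _
    _ ≤ ∫ u, L * |μ| * ‖u‖ ∂ν := by
        refine integral_mono (hint.sub (integrable_const _)).norm
          ((continuous_norm.integrable_of_ae_mem_of_isCompact hK hν).const_mul _) fun u => ?_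
        simpa [norm_smul, mul_assoc] using hL (x + μ • u) x
    _ = L * |μ| * ∫ u, ‖u‖ ∂ν := integral_const_mul _ _

end Smoothing

theorem norm_gradient_sub_gradient {E : Type*} [NormedAddCommGroup E] [InnerProductSpace ℝ E]
    [CompleteSpace E] (f₁ f₂ : E → ℝ) (a b : E) :
    ‖gradient f₁ a - gradient f₂ b‖ = ‖fderiv ℝ f₁ a - fderiv ℝ f₂ b‖ := by
  simp only [gradient, ← map_sub, LinearIsometryEquiv.norm_map]

section BallUniform

variable {d : ℕ}

-- `ballUniform d` is definitionally the conditioned measure `volume[|closedBall 0 1]`.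
instance : IsProbabilityMeasure (ballUniform d) :=
  ProbabilityTheory.cond_isProbabilityMeasure_of_finite
    (measure_closedBall_pos _ _ one_pos).ne' measure_closedBall_lt_top.ne

theorem ae_mem_closedBall_ballUniform :
    ∀ᵐ u ∂ballUniform d, u ∈ closedBall (0 : EuclideanSpace ℝ (Fin d)) 1 :=
  ProbabilityTheory.ae_cond_mem measurableSet_closedBall

theorem integral_norm_ballUniform : ∫ u, ‖u‖ ∂ballUniform d = d / (d + 1) := by
  rcases Nat.eq_zero_or_pos d with rfl | hd
  · simp [Subsingleton.elim _ (0 : EuclideanSpace ℝ (Fin 0))]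
  have : Nonempty (Fin d) := ⟨⟨0, hd⟩⟩
  set B := closedBall (0 : EuclideanSpace ℝ (Fin d)) 1
  have hradial :
      ∫ y in Set.Ioi (0 : ℝ), y ^ (d - 1) • (Set.Iic 1).indicator id y = 1 / (d + 1) := by
    have hpow : ∀ y : ℝ, y ^ (d - 1) • (Set.Iic 1).indicator id y =
        (Set.Iic 1).indicator (· ^ d) y := by
      intro y
      by_cases hy : y ∈ Set.Iic 1
      · simp [hy, ← pow_succ, Nat.sub_add_cancel hd]
      · simp [hy]
    simp_rw [hpow]
    rw [integral_indicator measurableSet_Iic, Measure.restrict_restrict measurableSet_Iic,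
      Set.Iic_inter_Ioi, ← intervalIntegral.integral_of_le zero_le_one, integral_pow]
    simp
  have hball : ∫ u in B, ‖u‖ = d * volume.real B / (d + 1) := by
    have : ∫ u in B, ‖u‖ = ∫ u : EuclideanSpace ℝ (Fin d), (Set.Iic 1).indicator id ‖u‖ := by
      rw [← integral_indicator measurableSet_closedBall]
      congr 1
      ext u
      by_cases hu : ‖u‖ ≤ (1 : ℝ) <;> simp [Set.indicator, hu]
    rw [this, integral_fun_norm_addHaar, finrank_euclideanSpace_fin, hradial, measureReal_def,
      measureReal_def, Measure.addHaar_closedBall_eq_addHaar_ball, nsmul_eq_mul, smul_eq_mul]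
    ring
  have hB : volume.real B ≠ 0 := by
    simp [B, measureReal_def, ENNReal.toReal_eq_zero_iff, (measure_closedBall_pos _ _ one_pos).ne',
      measure_closedBall_lt_top.ne]
  rw [ballUniform, integral_smul_measure, hball, ENNReal.toReal_inv, smul_eq_mul, ← measureReal_def]
  field_simp
  exact div_self hB

end BallUniform

section BallSmoothing

variable {d : ℕ} {g : EuclideanSpace ℝ (Fin d) → ℝ} {L : ℝ}

theorem differentiable_integral_comp_add_smul_ballUniform (hg : Differentiable ℝ g)
    (hL : ∀ a b, ‖gradient g a - gradient g b‖ ≤ L * ‖a - b‖) (μ : ℝ) :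
    Differentiable ℝ (fun x => ∫ u, g (x + μ • u) ∂ballUniform d) := fun x =>
  (hasFDerivAt_integral_comp_add_smul
    (contDiff_one_of_norm_fderiv_sub_le hg fun a b => norm_gradient_sub_gradient g g a b ▸ hL a b)
    (isCompact_closedBall 0 1) ae_mem_closedBall_ballUniform μ x).differentiableAt

theorem sq_norm_gradient_integral_comp_add_smul_ballUniform_sub_le (hg : Differentiable ℝ g)
    (hL : ∀ a b, ‖gradient g a - gradient g b‖ ≤ L * ‖a - b‖) (μ : ℝ)
    (x : EuclideanSpace ℝ (Fin d)) :
    ‖gradient (fun x' => ∫ u, g (x' + μ • u) ∂ballUniform d) x - gradient g x‖ ^ 2 ≤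
      μ ^ 2 * d ^ 2 * L ^ 2 / 4 := by
  have hgap := norm_fderiv_integral_comp_add_smul_sub_le hg
    (fun a b => norm_gradient_sub_gradient g g a b ▸ hL a b) (isCompact_closedBall 0 1)
    ae_mem_closedBall_ballUniform μ x
  rw [integral_norm_ballUniform, ← norm_gradient_sub_gradient] at hgap
  have hd : (d : ℝ) / (d + 1) ≤ d / 2 := by
    rw [div_le_div_iff₀ (by positivity) two_pos]
    have : (d : ℝ) ≤ d ^ 2 := by exact_mod_cast Nat.le_self_pow two_ne_zero d
    nlinarith
  have hgap' : ‖gradient (fun x' => ∫ u, g (x' + μ • u) ∂ballUniform d) x - gradient g x‖ ≤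
      |L * μ| * d / 2 :=
    calc _ ≤ L * |μ| * (d / (d + 1)) := hgap
      _ ≤ |L * μ| * (d / (d + 1)) := by
        rw [abs_mul]
        gcongr
        exact le_abs_self L
      _ ≤ |L * μ| * (d / 2) := by gcongr
      _ = |L * μ| * d / 2 := by ring
  calc _ ≤ (|L * μ| * d / 2) ^ 2 := pow_le_pow_left₀ (norm_nonneg _) hgap' 2
    _ = μ ^ 2 * d ^ 2 * L ^ 2 / 4 := by rw [div_pow, mul_pow, sq_abs]; ring

end BallSmoothing

theorem smoothed_gradient_gap_general
    (dx dy : ℕ)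
    (f : EuclideanSpace ℝ (Fin dx) → EuclideanSpace ℝ (Fin dy) → ℝ)
    (hdiff : Differentiable ℝ
      fun p : EuclideanSpace ℝ (Fin dx) × EuclideanSpace ℝ (Fin dy) => f p.1 p.2)
    (Lx Ly : ℝ)
    (hlipx : ∀ (y : EuclideanSpace ℝ (Fin dy)) (x₁ x₂ : EuclideanSpace ℝ (Fin dx)),
      ‖gradient (fun x => f x y) x₁ - gradient (fun x => f x y) x₂‖ ≤ Lx * ‖x₁ - x₂‖)
    (hlipy : ∀ (x : EuclideanSpace ℝ (Fin dx)) (y₁ y₂ : EuclideanSpace ℝ (Fin dy)),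
      ‖gradient (fun y => f x y) y₁ - gradient (fun y => f x y) y₂‖ ≤ Ly * ‖y₁ - y₂‖)
    (μ₁ μ₂ : ℝ) :
    ∀ (x : EuclideanSpace ℝ (Fin dx)) (y : EuclideanSpace ℝ (Fin dy)),
      (Differentiable ℝ (fun x' => ∫ u, f (x' + μ₁ • u) y ∂(ballUniform dx)) ∧
        ‖gradient (fun x' => ∫ u, f (x' + μ₁ • u) y ∂(ballUniform dx)) x -
            gradient (fun x' => f x' y) x‖ ^ 2 ≤ μ₁ ^ 2 * (dx : ℝ) ^ 2 * Lx ^ 2 / 4) ∧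
      (Differentiable ℝ (fun y' => ∫ v, f x (y' + μ₂ • v) ∂(ballUniform dy)) ∧
        ‖gradient (fun y' => ∫ v, f x (y' + μ₂ • v) ∂(ballUniform dy)) y -
            gradient (fun y' => f x y') y‖ ^ 2 ≤ μ₂ ^ 2 * (dy : ℝ) ^ 2 * Ly ^ 2 / 4) := by
  intro x y
  have hfx : Differentiable ℝ (fun x' => f x' y) :=
    hdiff.comp (differentiable_id.prodMk (differentiable_const y))
  have hfy : Differentiable ℝ (fun y' => f x y') :=
    hdiff.comp ((differentiable_const x).prodMk differentiable_id)
  exact ⟨⟨differentiable_integral_comp_add_smul_ballUniform hfx (hlipx y) μ₁,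
      sq_norm_gradient_integral_comp_add_smul_ballUniform_sub_le hfx (hlipx y) μ₁ x⟩,
    ⟨differentiable_integral_comp_add_smul_ballUniform hfy (hlipy x) μ₂,
      sq_norm_gradient_integral_comp_add_smul_ballUniform_sub_le hfy (hlipy x) μ₂ y⟩⟩

/-- The smoothed functions are differentiable in each variable and their partial gradients
are within `μ d L / 2` of the corresponding partial gradients of `f`. -/
theorem smoothed_gradient_gap
    (dx dy : ℕ) (hdx : 1 ≤ dx) (hdy : 1 ≤ dy)
    (f : EuclideanSpace ℝ (Fin dx) → EuclideanSpace ℝ (Fin dy) → ℝ)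
    (hdiff : Differentiable ℝ
      fun p : EuclideanSpace ℝ (Fin dx) × EuclideanSpace ℝ (Fin dy) => f p.1 p.2)
    (Lx Ly : ℝ)
    (hlipx : ∀ (y : EuclideanSpace ℝ (Fin dy)) (x₁ x₂ : EuclideanSpace ℝ (Fin dx)),
      ‖gradient (fun x => f x y) x₁ - gradient (fun x => f x y) x₂‖ ≤ Lx * ‖x₁ - x₂‖)
    (hlipy : ∀ (x : EuclideanSpace ℝ (Fin dx)) (y₁ y₂ : EuclideanSpace ℝ (Fin dy)),
      ‖gradient (fun y => f x y) y₁ - gradient (fun y => f x y) y₂‖ ≤ Ly * ‖y₁ - y₂‖)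
    (μ₁ μ₂ : ℝ) (hμ₁ : 0 < μ₁) (hμ₂ : 0 < μ₂) :
    ∀ (x : EuclideanSpace ℝ (Fin dx)) (y : EuclideanSpace ℝ (Fin dy)),
      (Differentiable ℝ (fun x' => ∫ u, f (x' + μ₁ • u) y ∂(ballUniform dx)) ∧
        ‖gradient (fun x' => ∫ u, f (x' + μ₁ • u) y ∂(ballUniform dx)) x -
            gradient (fun x' => f x' y) x‖ ^ 2 ≤ μ₁ ^ 2 * (dx : ℝ) ^ 2 * Lx ^ 2 / 4) ∧
      (Differentiable ℝ (fun y' => ∫ v, f x (y' + μ₂ • v) ∂(ballUniform dy)) ∧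
        ‖gradient (fun y' => ∫ v, f x (y' + μ₂ • v) ∂(ballUniform dy)) y -
            gradient (fun y' => f x y') y‖ ^ 2 ≤ μ₂ ^ 2 * (dy : ℝ) ^ 2 * Ly ^ 2 / 4) :=
  smoothed_gradient_gap_general dx dy f hdiff Lx Ly hlipx hlipy μ₁ μ₂
end

section
/- Let X ⊆ ℝ^n be nonempty, closed and convex, h : ℝ^n → ℝ convex and continuous, g ∈ ℝ^n, x₀ ∈ X, and c > 0. If x⁺ minimizes z ↦ ⟨g, z − x₀⟩ + h(z) + (c/2)‖z − x₀‖² over X, then ⟨g, x⁺ − x₀⟩ + h(x⁺) − h(x₀) ≤ −c ‖x⁺ − x₀‖². -/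
open MeasureTheory Metric
open scoped ENNReal RealInnerProductSpace

/-- Descent property of the proximal gradient step. -/
theorem prox_step_descent
    (n : ℕ) (X : Set (EuclideanSpace ℝ (Fin n)))
    (hXne : X.Nonempty) (hXcl : IsClosed X) (hXconv : Convex ℝ X)
    (h : EuclideanSpace ℝ (Fin n) → ℝ)
    (hhconv : ConvexOn ℝ Set.univ h) (hhcont : Continuous h)
    (g x₀ : EuclideanSpace ℝ (Fin n)) (hx₀ : x₀ ∈ X)
    (c : ℝ) (hc : 0 < c)
    (xp : EuclideanSpace ℝ (Fin n)) (hxpmem : xp ∈ X)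
    (hxp : IsMinOn (fun z => ⟪g, z - x₀⟫ + h z + c / 2 * ‖z - x₀‖ ^ 2) X xp) :
    ⟪g, xp - x₀⟫ + h xp - h x₀ ≤ -c * ‖xp - x₀‖ ^ 2 := by
  set I := ⟪g, xp - x₀⟫ with hI
  set r2 := ‖xp - x₀‖ ^ 2 with hr2
  have hr2nn : 0 ≤ r2 := sq_nonneg _
  have key : ∀ t : ℝ, 0 ≤ t → t < 1 → I + h xp - h x₀ ≤ -(c/2) * (1+t) * r2 := by
    intro t ht0 ht1
    have h1t : 0 < 1 - t := by linarith
    set xt := (1 - t) • x₀ + t • xp with hxt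
    have hmem : xt ∈ X := hXconv hx₀ hxpmem (by linarith) ht0 (by ring)
    have hdiff : xt - x₀ = t • (xp - x₀) := by
      rw [hxt]; module
    have hmin := hxp hmem
    simp only [Set.mem_setOf_eq, hdiff] at hmin
    rw [real_inner_smul_right, norm_smul] at hmin
    have habs : ‖t‖ = t := by rw [Real.norm_eq_abs]; exact abs_of_nonneg ht0
    rw [habs] at hmin
    have hconv : h xt ≤ (1 - t) * h x₀ + t * h xp := by
      have h2 := hhconv.2 (Set.mem_univ x₀) (Set.mem_univ xp)
        (le_of_lt h1t) ht0 (by ring : (1 - t) + t = 1)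
      simpa only [smul_eq_mul, ← hxt] using h2
    have hmin' : I + h xp + c/2 * r2 ≤ t * I + h xt + c/2 * (t^2 * r2) := by
      rw [hI, hr2]
      calc I + h xp + c/2 * ‖xp - x₀‖^2 ≤
          t * I + h xt + c/2 * (t * ‖xp - x₀‖)^2 := hmin
        _ = t * I + h xt + c/2 * (t^2 * ‖xp - x₀‖^2) := by ring
    have hmul : (1-t) * (I + h xp - h x₀) ≤ (1-t) * (-(c/2) * (1+t) * r2) := by
      nlinarith [hconv, hmin']
    exact le_of_mul_le_mul_left hmul h1t
  rcases eq_or_lt_of_le hr2nn with hr0 | hrpos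
  · have hk := key 0 le_rfl (by norm_num)
    rw [← hr0] at hk ⊢
    linarith
  · apply le_of_forall_pos_le_add
    intro ε hε
    set t := max 0 (1 - ε / (c * r2)) with htdef
    have hquot : 0 < ε / (c * r2) := div_pos hε (mul_pos hc hrpos)
    have ht0 : 0 ≤ t := le_max_left _ _
    have ht1 : t < 1 := by
      rcases max_cases 0 (1 - ε / (c * r2)) with ⟨he, _⟩ | ⟨he, _⟩ <;>
        rw [htdef, he] <;> linarith
    have h1t : 1 - t ≤ ε / (c * r2) := by
      have := le_max_right 0 (1 - ε / (c * r2))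
      linarith
    have hk := key t ht0 ht1
    have hstep : (c/2) * (1 - t) * r2 ≤ ε := by
      have h1 : (1 - t) * (c * r2) ≤ (ε / (c * r2)) * (c * r2) :=
        mul_le_mul_of_nonneg_right h1t (le_of_lt (mul_pos hc hrpos))
      rw [div_mul_cancel₀ _ (ne_of_gt (mul_pos hc hrpos))] at h1
      nlinarith
    nlinarith
end
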